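/- arXiv:1703.04838 — 7 statements merged into one kernel-verified Lean document; each statement's English description precedes it below -/
import Mathlib

section
/- For every real α > 2 and every x ≥ 0, the SIR coverage function satisfies the upper bound P_α(x) ≤ (1 + x)^(−2/α). -/
open MeasureTheory Filter Real Set
open scoped Topology

/-- The closed-form downlink SIR coverage denominator:
`h α x = 1 + ∫_1^∞ x / (x + w^(α/2)) dw`. -/
noncomputable def hcov (α x : ℝ) : ℝ := 1 + ∫ w in Set.Ioi (1 : ℝ), x / (x + w ^ (α / 2))

/-- The SIR coverage function `P_α(x) = h_α(x)⁻¹`. -/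
noncomputable def Pcov (α x : ℝ) : ℝ := (hcov α x)⁻¹

/-!
With `β = α / 2`, the function `G w = w - (x + w ^ β) ^ β⁻¹` tends to `0` at infinity and has
derivative `1 - q ^ (1 - β⁻¹)`, where `q = w ^ β / (x + w ^ β) ∈ (0, 1]`. That derivative lies between
`0` and `1 - q = x / (x + w ^ β)`, so integrating over `(1, ∞)` gives
`(1 + x) ^ β⁻¹ - 1 = ∫ G' ≤ ∫ x / (x + w ^ β) = h_α(x) - 1`.
-/

namespace SIRCoverage

variable {x β w : ℝ}

lemma rpow_sub_one_mul_add_rpow_inv_sub_one (hβ : β ≠ 0) (hx : 0 ≤ x) (hw : 0 < w) :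
    w ^ (β - 1) * (x + w ^ β) ^ (β⁻¹ - 1) = (w ^ β / (x + w ^ β)) ^ (1 - β⁻¹) := by
  have hwβ : 0 < w ^ β := rpow_pos_of_pos hw β
  rw [div_rpow hwβ.le (by positivity), ← rpow_mul hw.le, mul_sub, mul_one, mul_inv_cancel₀ hβ,
    div_eq_mul_inv, ← rpow_neg (by positivity), neg_sub]

lemma hasDerivAt_sub_add_rpow_rpow_inv (hβ : β ≠ 0) (hx : 0 ≤ x) (hw : 0 < w) :
    HasDerivAt (fun w => w - (x + w ^ β) ^ β⁻¹) (1 - (w ^ β / (x + w ^ β)) ^ (1 - β⁻¹)) w := by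
  have hsum : HasDerivAt (fun w => x + w ^ β) (β * w ^ (β - 1)) w :=
    (hasDerivAt_rpow_const (Or.inl hw.ne')).const_add x
  refine ((hasDerivAt_id w).sub (hsum.rpow_const (p := β⁻¹)
    (Or.inl (by positivity : 0 < x + w ^ β).ne'))).congr_deriv ?_
  rw [← rpow_sub_one_mul_add_rpow_inv_sub_one hβ hx hw]
  field_simp

lemma add_rpow_rpow_inv_sub_le (hβ : 1 < β) (hx : 0 ≤ x) (hw : 0 < w) :
    (x + w ^ β) ^ β⁻¹ - w ≤ β⁻¹ * x * w ^ (1 - β) := by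
  have hwβ : 0 < w ^ β := rpow_pos_of_pos hw β
  have hroot : (w ^ β) ^ β⁻¹ = w := rpow_rpow_inv hw.le (by positivity)
  have hbern : (1 + x / w ^ β) ^ β⁻¹ ≤ 1 + β⁻¹ * (x / w ^ β) :=
    rpow_one_add_le_one_add_mul_self (by linarith [div_nonneg hx hwβ.le]) (by positivity)
      (inv_le_one_of_one_le₀ hβ.le)
  have hsplit : (x + w ^ β) ^ β⁻¹ = w * (1 + x / w ^ β) ^ β⁻¹ := by
    rw [← hroot, ← mul_rpow hwβ.le (by positivity), hroot]
    congr 1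
    field_simp
    ring
  have hpow : w * (w ^ β)⁻¹ = w ^ (1 - β) := by
    rw [sub_eq_add_neg, rpow_add hw, rpow_one, rpow_neg hw.le]
  calc (x + w ^ β) ^ β⁻¹ - w ≤ w * (1 + β⁻¹ * (x / w ^ β)) - w := by
        rw [hsplit]; gcongr
    _ = β⁻¹ * x * (w * (w ^ β)⁻¹) := by ring
    _ = β⁻¹ * x * w ^ (1 - β) := by rw [hpow]

lemma tendsto_sub_add_rpow_rpow_inv (hβ : 1 < β) (hx : 0 ≤ x) :
    Tendsto (fun w => w - (x + w ^ β) ^ β⁻¹) atTop (𝓝 0) := by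
  have hdecay : Tendsto (fun w : ℝ => -(β⁻¹ * x * w ^ (1 - β))) atTop (𝓝 0) := by
    simpa [neg_sub] using ((tendsto_rpow_neg_atTop (y := β - 1) (by linarith)).const_mul
      (β⁻¹ * x)).neg
  refine tendsto_of_tendsto_of_tendsto_of_le_of_le' hdecay tendsto_const_nhds ?_ ?_
  · filter_upwards [eventually_gt_atTop 0] with w hw
    linarith [add_rpow_rpow_inv_sub_le hβ hx hw]
  · filter_upwards [eventually_gt_atTop 0] with w hw
    have hroot : (w ^ β) ^ β⁻¹ = w := rpow_rpow_inv hw.le (by linarith)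
    have : (w ^ β) ^ β⁻¹ ≤ (x + w ^ β) ^ β⁻¹ := by gcongr; linarith
    linarith

lemma integrableOn_Ioi_div_add_rpow (hβ : 1 < β) (hx : 0 ≤ x) :
    IntegrableOn (fun w => x / (x + w ^ β)) (Ioi 1) := by
  have hcont : ContinuousOn (fun w => x / (x + w ^ β)) (Ioi 1) := by
    refine continuousOn_const.div (continuousOn_const.add
      (continuousOn_id.rpow_const fun w _ => Or.inr (by linarith))) fun w hw => ?_
    have : 0 < w ^ β := rpow_pos_of_pos (one_pos.trans hw) β
    positivity
  refine ((integrableOn_Ioi_rpow_of_lt (neg_lt_neg hβ) one_pos).const_mul x).mono'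
    (hcont.aestronglyMeasurable measurableSet_Ioi) ?_
  filter_upwards [ae_restrict_mem measurableSet_Ioi] with w hw
  have hwβ : 0 < w ^ β := rpow_pos_of_pos (one_pos.trans hw) β
  rw [norm_of_nonneg (by positivity), rpow_neg (one_pos.trans hw).le, ← div_eq_mul_inv]
  gcongr
  linarith

lemma one_sub_rpow_mem_Icc {q s : ℝ} (hq₀ : 0 ≤ q) (hq₁ : q ≤ 1) (hs₀ : 0 ≤ s) (hs₁ : s ≤ 1) :
    1 - q ^ s ∈ Icc 0 (1 - q) :=
  ⟨sub_nonneg.2 (rpow_le_one hq₀ hq₁ hs₀), by linarith [self_le_rpow_of_le_one hq₀ hq₁ hs₁]⟩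

theorem rpow_inv_le_one_add_integral (hβ : 1 < β) (hx : 0 ≤ x) :
    (1 + x) ^ β⁻¹ ≤ 1 + ∫ w in Ioi 1, x / (x + w ^ β) := by
  set G : ℝ → ℝ := fun w => w - (x + w ^ β) ^ β⁻¹
  set g : ℝ → ℝ := fun w => 1 - (w ^ β / (x + w ^ β)) ^ (1 - β⁻¹)
  have hderiv : ∀ w ∈ Ici (1 : ℝ), HasDerivAt G (g w) w := fun w hw =>
    hasDerivAt_sub_add_rpow_rpow_inv (by linarith) hx (one_pos.trans_le hw)
  have hg : ∀ w ∈ Ioi (1 : ℝ), g w ∈ Icc 0 (x / (x + w ^ β)) := by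
    intro w hw
    have hwβ : 0 < w ^ β := rpow_pos_of_pos (one_pos.trans hw) β
    have hq : w ^ β / (x + w ^ β) ≤ 1 := div_le_one_of_le₀ (by linarith) (by positivity)
    convert one_sub_rpow_mem_Icc (by positivity) hq (sub_nonneg.2 (inv_le_one_of_one_le₀ hβ.le))
      (sub_le_self _ (by positivity)) using 2
    field_simp
    ring
  have hlim := tendsto_sub_add_rpow_rpow_inv hβ hx
  have hintegral : ∫ w in Ioi 1, g w = (1 + x) ^ β⁻¹ - 1 := by
    rw [integral_Ioi_of_hasDerivAt_of_nonneg' hderiv (fun w hw => (hg w hw).1) hlim]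
    simp [G, add_comm]
  have hmono : ∫ w in Ioi 1, g w ≤ ∫ w in Ioi 1, x / (x + w ^ β) :=
    setIntegral_mono_on (integrableOn_Ioi_deriv_of_nonneg' hderiv (fun w hw => (hg w hw).1) hlim)
      (integrableOn_Ioi_div_add_rpow hβ hx) measurableSet_Ioi fun w hw => (hg w hw).2
  linarith

end SIRCoverage

open SIRCoverage in
/-- For every `α > 2` and `x ≥ 0`, `P_α(x) ≤ (1 + x)^(-2/α)`. -/
theorem sir_coverage_upper_bound (α : ℝ) (hα : 2 < α) (x : ℝ) (hx : 0 ≤ x) :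
    Pcov α x ≤ (1 + x) ^ (-(2 / α)) := by
  have hβ : 1 < α / 2 := by linarith
  have hbound := rpow_inv_le_one_add_integral hβ hx
  rw [inv_div] at hbound
  rw [Pcov, hcov, rpow_neg (by linarith)]
  exact inv_anti₀ (by positivity) hbound
end

section
/- For every real α > 2 and every x ≥ 0, the SIR coverage function satisfies the lower bound P_α(x) ≥ (α/(2π))·sin(2π/α)·(1 + x)^(−2/α). -/
/-!
Put `q = α / 2` and `C = ∫₀^∞ (1 + u^q)⁻¹ du`. Integrating `e^{-s(1 + u^q)}` over `(s, u)` in both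
orders and using Euler's reflection formula gives `C = Γ(1 + 1/q) Γ(1 - 1/q) = (π/q) / sin(π/q)`,
and the substitution `w = x^{1/q} u` gives `∫₀^∞ x / (x + w^q) dw = C x^{1/q}`. Hence
`h(x) = C x^{1/q} + ∫₀¹ (1 - x / (x + w^q)) dw`. The last integrand `w^q / (x + w^q)` is at most
the derivative of `w ↦ (x + w^q)^{1/q}`, because `w ≤ (x + w^q)^{1/q}`, so the integral is at most
`(1 + x)^{1/q} - x^{1/q}`. Since `C ≥ 1` (`sin y ≤ y`), `h(x) ≤ C (1 + x)^{1/q}`.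
-/

open MeasureTheory Filter Real Set

section

variable {q : ℝ}

lemma integral_Ioi_exp_neg_one_add_rpow_mul (hq : 0 < q) {s : ℝ} (hs : 0 < s) :
    ∫ u in Ioi 0, exp (-(1 + u ^ q) * s) =
      Gamma (1 / q + 1) * (exp (-s) * s ^ (1 - 1 / q - 1)) := by
  have hsplit (u : ℝ) : exp (-(1 + u ^ q) * s) = exp (-s) * exp (-s * u ^ q) := by
    rw [← exp_add]; ring_nf
  simp_rw [hsplit, integral_const_mul, integral_exp_neg_mul_rpow hq hs]
  ring_nf

lemma integral_Ioi_exp_neg_mul_one_add_rpow {u : ℝ} (hu : 0 ≤ u) :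
    ∫ s in Ioi 0, exp (-(1 + u ^ q) * s) = (1 + u ^ q)⁻¹ := by
  rw [integral_exp_mul_Ioi (neg_lt_zero.2 (by positivity)), mul_zero, exp_zero, neg_div, div_neg,
    neg_neg, one_div]

lemma one_sub_one_div_pos_of_one_lt (hq : 1 < q) : 0 < 1 - 1 / q := by
  rw [sub_pos, div_lt_one (by linarith)]
  exact hq

lemma integrable_exp_neg_one_add_rpow_mul (hq : 1 < q) :
    Integrable (fun p : ℝ × ℝ => exp (-(1 + p.2 ^ q) * p.1))
      ((volume.restrict (Ioi 0)).prod (volume.restrict (Ioi 0))) := by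
  have hq0 : 0 < q := by linarith
  have hmeas : AEStronglyMeasurable (fun p : ℝ × ℝ => exp (-(1 + p.2 ^ q) * p.1))
      ((volume.restrict (Ioi 0)).prod (volume.restrict (Ioi 0))) := by
    fun_prop
  rw [integrable_prod_iff hmeas]
  constructor
  · filter_upwards [ae_restrict_mem measurableSet_Ioi] with s (hs : 0 < s)
    refine Integrable.of_integral_ne_zero ?_
    rw [integral_Ioi_exp_neg_one_add_rpow_mul hq0 hs]
    positivity
  · refine ((GammaIntegral_convergent (one_sub_one_div_pos_of_one_lt hq)).const_mul
      (Gamma (1 / q + 1))).congr ?_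
    filter_upwards [ae_restrict_mem measurableSet_Ioi] with s (hs : 0 < s)
    simp_rw [norm_of_nonneg (exp_pos _).le]
    rw [integral_Ioi_exp_neg_one_add_rpow_mul hq0 hs]

lemma integral_Ioi_inv_one_add_rpow (hq : 1 < q) :
    ∫ u in Ioi 0, (1 + u ^ q)⁻¹ = π / q / sin (π / q) := by
  have hq0 : 0 < q := by linarith
  have hswap := integral_integral_swap (f := fun s u => exp (-(1 + u ^ q) * s))
    (integrable_exp_neg_one_add_rpow_mul hq)
  rw [setIntegral_congr_fun measurableSet_Ioi
      (fun s (hs : 0 < s) => integral_Ioi_exp_neg_one_add_rpow_mul hq0 hs),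
    setIntegral_congr_fun measurableSet_Ioi
      (fun u (hu : 0 < u) => integral_Ioi_exp_neg_mul_one_add_rpow (q := q) hu.le),
    integral_const_mul, ← Gamma_eq_integral (one_sub_one_div_pos_of_one_lt hq)] at hswap
  rw [← hswap, Gamma_add_one (by positivity), mul_assoc, Gamma_mul_Gamma_one_sub]
  ring_nf

lemma integrableOn_Ioi_inv_one_add_rpow (hq : 1 < q) :
    IntegrableOn (fun u => (1 + u ^ q)⁻¹) (Ioi (0 : ℝ)) :=
  (integrable_exp_neg_one_add_rpow_mul hq).integral_prod_right.congr <|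
    (ae_restrict_mem measurableSet_Ioi).mono fun u (hu : 0 < u) =>
      integral_Ioi_exp_neg_mul_one_add_rpow hu.le

end

lemma one_le_div_sin {y : ℝ} (hy₀ : 0 < y) (hyπ : y < π) : 1 ≤ y / sin y := by
  rw [one_le_div (sin_pos_of_pos_of_lt_pi hy₀ hyπ)]
  exact sin_le hy₀.le

section

variable {q x : ℝ}

lemma div_add_rpow_inv_mul_rpow (hq : q ≠ 0) (hx : 0 < x) {u : ℝ} (hu : 0 ≤ u) :
    x / (x + (x ^ q⁻¹ * u) ^ q) = (1 + u ^ q)⁻¹ := by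
  rw [mul_rpow (by positivity) hu, ← rpow_mul hx.le, inv_mul_cancel₀ hq, rpow_one,
    ← mul_one_add, div_mul_eq_div_div, div_self hx.ne', one_div]

lemma integrableOn_Ioi_div_add_rpow (hq : 1 < q) (hx : 0 < x) :
    IntegrableOn (fun w => x / (x + w ^ q)) (Ioi 0) := by
  have hc : 0 < x ^ q⁻¹ := by positivity
  rw [← mul_zero (x ^ q⁻¹), ← integrableOn_Ioi_comp_mul_left_iff _ _ hc]
  exact (integrableOn_Ioi_inv_one_add_rpow hq).congr_fun
    (fun u (hu : 0 < u) => (div_add_rpow_inv_mul_rpow (by linarith) hx hu.le).symm)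
    measurableSet_Ioi

lemma integral_Ioi_div_add_rpow (hq : 1 < q) (hx : 0 < x) :
    ∫ w in Ioi 0, x / (x + w ^ q) = π / q / sin (π / q) * x ^ q⁻¹ := by
  have hc : 0 < x ^ q⁻¹ := by positivity
  have := integral_comp_mul_left_Ioi (fun w => x / (x + w ^ q)) 0 hc
  rw [mul_zero, setIntegral_congr_fun measurableSet_Ioi
      (fun u (hu : 0 < u) => div_add_rpow_inv_mul_rpow (by linarith) hx hu.le),
    integral_Ioi_inv_one_add_rpow hq, smul_eq_mul, eq_inv_mul_iff_mul_eq₀ hc.ne'] at this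
  rw [← this, mul_comm]

end

section

variable {q x : ℝ}

lemma one_sub_div_add_rpow_le (hq : 0 < q) (hx : 0 ≤ x) {w : ℝ} (hw : 0 < w) :
    1 - x / (x + w ^ q) ≤ q * w ^ (q - 1) * q⁻¹ * (x + w ^ q) ^ (q⁻¹ - 1) := by
  have hs : 0 < x + w ^ q := by positivity
  have hw_le : w ≤ (x + w ^ q) ^ q⁻¹ := by
    calc w = (w ^ q) ^ q⁻¹ := by rw [← rpow_mul hw.le, mul_inv_cancel₀ hq.ne', rpow_one]
      _ ≤ (x + w ^ q) ^ q⁻¹ := by gcongr; linarith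
  calc 1 - x / (x + w ^ q) = w ^ (q - 1) * w / (x + w ^ q) := by
        rw [← rpow_add_one hw.ne', sub_add_cancel]; field_simp; ring
    _ ≤ w ^ (q - 1) * (x + w ^ q) ^ q⁻¹ / (x + w ^ q) := by gcongr
    _ = q * w ^ (q - 1) * q⁻¹ * (x + w ^ q) ^ (q⁻¹ - 1) := by
        rw [rpow_sub_one hs.ne']; field_simp

lemma integral_one_sub_div_add_rpow_le (hq : 0 < q) (hx : 0 < x) :
    ∫ w in (0 : ℝ)..1, (1 - x / (x + w ^ q)) ≤ (x + 1) ^ q⁻¹ - x ^ q⁻¹ := by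
  have hpow : ContinuousOn (fun w : ℝ => w ^ q) (Icc 0 1) := fun w _ =>
    (continuousAt_rpow_const w q (Or.inr hq.le)).continuousWithinAt
  have hbase_pos : ∀ w ∈ Icc (0 : ℝ) 1, 0 < x + w ^ q := fun w hw => by
    have := rpow_nonneg hw.1 q
    linarith
  have hcont : ContinuousOn (fun w : ℝ => (x + w ^ q) ^ q⁻¹) (Icc 0 1) :=
    (continuousOn_const.add hpow).rpow_const fun _ _ => Or.inr (inv_nonneg.2 hq.le)
  have hint : IntegrableOn (fun w : ℝ => 1 - x / (x + w ^ q)) (Icc 0 1) :=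
    (continuousOn_const.sub (continuousOn_const.div (continuousOn_const.add hpow)
      fun w hw => (hbase_pos w hw).ne')).integrableOn_Icc
  have hderiv : ∀ w ∈ Ioo (0 : ℝ) 1, HasDerivWithinAt (fun w : ℝ => (x + w ^ q) ^ q⁻¹)
      (q * w ^ (q - 1) * q⁻¹ * (x + w ^ q) ^ (q⁻¹ - 1)) (Ioi w) w := fun w hw =>
    (((hasDerivAt_rpow_const (Or.inl hw.1.ne')).const_add x).rpow_const
      (Or.inl (hbase_pos w (Ioo_subset_Icc_self hw)).ne')).hasDerivWithinAt
  convert intervalIntegral.integral_le_sub_of_hasDeriv_right_of_le zero_le_one hcont hderiv hint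
    fun w hw => one_sub_div_add_rpow_le hq hx.le hw.1 using 1
  rw [one_rpow, zero_rpow hq.ne', add_zero]

end

lemma one_add_integral_Ioi_one_div_add_rpow_le {q x : ℝ} (hq : 1 < q) (hx : 0 ≤ x) :
    1 + ∫ w in Ioi 1, x / (x + w ^ q) ≤ π / q / sin (π / q) * (1 + x) ^ q⁻¹ := by
  set C := π / q / sin (π / q)
  have hC : 1 ≤ C := one_le_div_sin (by positivity) (div_lt_self pi_pos hq)
  rcases hx.eq_or_lt with rfl | hx
  · simpa using hC
  have hint := integrableOn_Ioi_div_add_rpow hq hx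
  have hsplit := intervalIntegral.integral_interval_add_Ioi hint
    (hint.mono_set (Ioi_subset_Ioi zero_le_one))
  rw [integral_Ioi_div_add_rpow hq hx] at hsplit
  have hhead : ∫ w in (0 : ℝ)..1, (1 - x / (x + w ^ q)) =
      1 - ∫ w in (0 : ℝ)..1, x / (x + w ^ q) := by
    rw [intervalIntegral.integral_sub intervalIntegrable_const
      ((intervalIntegrable_iff_integrableOn_Ioc_of_le zero_le_one).2
        (hint.mono_set Ioc_subset_Ioi_self))]
    simp
  have hmono : x ^ q⁻¹ ≤ (x + 1) ^ q⁻¹ := by gcongr; linarith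
  calc 1 + ∫ w in Ioi 1, x / (x + w ^ q)
      = C * x ^ q⁻¹ + ∫ w in (0 : ℝ)..1, (1 - x / (x + w ^ q)) := by rw [hhead]; linarith
    _ ≤ C * x ^ q⁻¹ + ((x + 1) ^ q⁻¹ - x ^ q⁻¹) := by
        gcongr; exact integral_one_sub_div_add_rpow_le (by linarith) hx
    _ ≤ C * x ^ q⁻¹ + C * ((x + 1) ^ q⁻¹ - x ^ q⁻¹) := by
        gcongr; exact le_mul_of_one_le_left (sub_nonneg.2 hmono) hC
    _ = C * (1 + x) ^ q⁻¹ := by rw [add_comm x]; ring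

/-- For every `α > 2` and `x ≥ 0`, `P_α(x) ≥ (α/(2π))·sin(2π/α)·(1 + x)^(-2/α)`. -/
theorem sir_coverage_lower_bound (α : ℝ) (hα : 2 < α) (x : ℝ) (hx : 0 ≤ x) :
    (α / (2 * π)) * Real.sin (2 * π / α) * (1 + x) ^ (-(2 / α)) ≤ Pcov α x := by
  have hq : 1 < α / 2 := by linarith
  have hpos : 0 < hcov α x := add_pos_of_pos_of_nonneg one_pos
    (setIntegral_nonneg measurableSet_Ioi fun w (hw : 1 < w) => div_nonneg hx (by positivity))
  calc α / (2 * π) * sin (2 * π / α) * (1 + x) ^ (-(2 / α))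
      = (π / (α / 2) / sin (π / (α / 2)) * (1 + x) ^ (α / 2)⁻¹)⁻¹ := by
        rw [rpow_neg (by linarith), inv_div, div_div_eq_mul_div, mul_comm π 2]
        field_simp
    _ ≤ Pcov α x := inv_anti₀ hpos (one_add_integral_Ioi_one_div_add_rpow_le hq hx)
end

section
/- Pfaff transformation identity for the coverage function: for every real α > 2 and every x ≥ 0, h_α(x) = (1 + x)^(2/α) · Σ_{n=0}^∞ [((−δ)_n)²/((1−δ)_n n!)] · (x/(1+x))^n, where δ = 2/α; equivalently P_α(x) = c₀(x)·(1+x)^(−2/α) with c₀(x) := [₂F₁(−δ, −δ; 1−δ; x/(1+x))]^(−1), and the series converges for all x ≥ 0. -/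
/-!
Write `δ = 2/α` and `z = x/(1+x)`. The substitution `w = ((1+x)/s - x)^δ` turns `h_α(x)` into
`1 + δ z (1+x)^δ ∫₀¹ s^(-δ) (1 - zs)^(δ-1) ds`. Expanding `(1 - zs)^(δ-1)` by the binomial series
and integrating termwise gives the integral as the Euler series `Σ (1-δ)_m z^m / (m! (m+1-δ))`.
Since `(-δ)_(m+1) = -δ (1-δ)_m`, the `(m+1)`-st term of `₂F₁(-δ, -δ; 1-δ; z)` is `δ z` times the
`m`-th Euler term minus `δ (1-δ)_m z^(m+1) / (m+1)!`, and
`δ (1-δ)_m / (m+1)! = (1-δ)_m / m! - (1-δ)_(m+1) / (m+1)!` sums these corrections through the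
binomial series of `(1-z)^(δ-1)`. Altogether `₂F₁(-δ, -δ; 1-δ; z) = (1-z)^δ + δ z ∫₀¹ …`, which is
`(1+x)^(-δ) h_α(x)`.
-/

open MeasureTheory Filter Real Set

open scoped Nat

theorem Ring.choose_add_sub_one_eq_ascPochhammer_div_factorial {K : Type*} [Field K] [CharZero K]
    (c : K) (n : ℕ) : Ring.choose (c + n - 1) n = (ascPochhammer K n).eval c / n ! := by
  rw [← Ring.multichoose_eq, eq_div_iff (Nat.cast_ne_zero.2 n.factorial_ne_zero), mul_comm,
    ← nsmul_eq_mul, Ring.factorial_nsmul_multichoose_eq_ascPochhammer,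
    Polynomial.ascPochhammer_smeval_eq_eval]

theorem ascPochhammer_succ_eval_left {S : Type*} [CommSemiring S] (n : ℕ) (r : S) :
    (ascPochhammer S (n + 1)).eval r = r * (ascPochhammer S n).eval (r + 1) := by
  rw [ascPochhammer_succ_left, Polynomial.eval_mul, Polynomial.eval_X, Polynomial.eval_comp,
    Polynomial.eval_add, Polynomial.eval_X, Polynomial.eval_one]

theorem hasSum_ascPochhammer_div_factorial_mul_pow (c : ℝ) {u : ℝ} (hu : |u| < 1) :
    HasSum (fun n : ℕ => (ascPochhammer ℝ n).eval c / n ! * u ^ n) ((1 - u) ^ (-c)) := by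
  have h := (Real.one_div_one_sub_rpow_hasFPowerSeriesOnBall_zero c).hasSum
    (y := u) (by simpa [enorm_eq_nnnorm, ← NNReal.coe_lt_coe] using hu)
  simpa [Ring.choose_add_sub_one_eq_ascPochhammer_div_factorial, mul_comm,
    Real.rpow_neg (show 0 ≤ 1 - u by linarith [abs_lt.1 hu])] using h

theorem setIntegral_Ioo_zero_one_rpow {r : ℝ} (hr : -1 < r) :
    ∫ t in Ioo (0 : ℝ) 1, t ^ r = 1 / (r + 1) := by
  rw [← integral_Ioc_eq_integral_Ioo, ← intervalIntegral.integral_of_le zero_le_one,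
    integral_rpow (Or.inl hr), one_rpow, zero_rpow (by linarith), sub_zero]

theorem hasSum_setIntegral_rpow_mul_one_sub_mul_rpow {a b z : ℝ} (ha : 0 < a) (hb : 0 < b)
    (hz0 : 0 ≤ z) (hz1 : z < 1) :
    HasSum (fun m : ℕ => (ascPochhammer ℝ m).eval a / m ! * z ^ m / (m + b))
      (∫ t in Ioo (0 : ℝ) 1, t ^ (b - 1) * (1 - t * z) ^ (-a)) := by
  set F : ℕ → ℝ → ℝ :=
    fun m t => (ascPochhammer ℝ m).eval a / m ! * z ^ m * t ^ ((m : ℝ) + b - 1)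
  have hcoef (m : ℕ) : 0 ≤ (ascPochhammer ℝ m).eval a / m ! * z ^ m :=
    mul_nonneg (div_nonneg ((ascPochhammer_pos m a ha).le) (by positivity)) (pow_nonneg hz0 m)
  have hexp (m : ℕ) : -1 < (m : ℝ) + b - 1 := by linarith [(Nat.cast_nonneg m : (0 : ℝ) ≤ m)]
  have hint (m : ℕ) : IntegrableOn (F m) (Ioo 0 1) :=
    ((intervalIntegral.integrableOn_Ioo_rpow_iff zero_lt_one).2 (hexp m)).const_mul _
  have hval (m : ℕ) : ∫ t in Ioo (0 : ℝ) 1, F m t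
      = (ascPochhammer ℝ m).eval a / m ! * z ^ m / (m + b) := by
    simp only [F]
    rw [integral_const_mul, setIntegral_Ioo_zero_one_rpow (hexp m)]
    ring
  have hnorm (m : ℕ) : ∫ t in Ioo (0 : ℝ) 1, ‖F m t‖ = ∫ t in Ioo (0 : ℝ) 1, F m t :=
    setIntegral_congr_fun measurableSet_Ioo fun t ht =>
      Real.norm_of_nonneg (mul_nonneg (hcoef m) (rpow_nonneg ht.1.le _))
  have hsum : Summable fun m : ℕ => (ascPochhammer ℝ m).eval a / m ! * z ^ m / (m + b) := by
    refine ((hasSum_ascPochhammer_div_factorial_mul_pow a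
      (by rwa [abs_of_nonneg hz0])).summable.div_const b).of_nonneg_of_le
      (fun m => div_nonneg (hcoef m) (by positivity)) fun m => ?_
    exact div_le_div_of_nonneg_left (hcoef m) hb (by linarith [(Nat.cast_nonneg m : (0 : ℝ) ≤ m)])
  have hterms := hasSum_integral_of_summable_integral_norm hint
    (by simpa only [hnorm, hval] using hsum)
  simp only [hval] at hterms
  suffices hpt : ∫ t in Ioo (0 : ℝ) 1, t ^ (b - 1) * (1 - t * z) ^ (-a)
      = ∫ t in Ioo (0 : ℝ) 1, ∑' m, F m t by rwa [hpt]
  refine setIntegral_congr_fun measurableSet_Ioo fun t ⟨ht0, ht1⟩ => ?_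
  have htz : |t * z| < 1 := by
    rw [abs_of_nonneg (by positivity)]
    nlinarith
  refine (((hasSum_ascPochhammer_div_factorial_mul_pow a htz).mul_left (t ^ (b - 1))).congr_fun
    fun m => ?_).tsum_eq.symm
  simp only [F]
  rw [show (m : ℝ) + b - 1 = m + (b - 1) by ring, rpow_add ht0, rpow_natCast]
  ring

theorem hasSum_hypergeometric_pfaff {d z : ℝ} (hd : d < 1) (hz0 : 0 ≤ z) (hz1 : z < 1) :
    HasSum (fun n : ℕ => ((ascPochhammer ℝ n).eval (-d)) ^ 2 /
        ((ascPochhammer ℝ n).eval (1 - d) * n !) * z ^ n)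
      ((1 - z) ^ d + d * z * ∫ s in Ioo (0 : ℝ) 1, s ^ (-d) * (1 - s * z) ^ (d - 1)) := by
  set M : ℕ → ℝ := fun m => (ascPochhammer ℝ m).eval (1 - d) / (m ! : ℝ)
  have hM : HasSum (fun m => M m * z ^ m) ((1 - z) ^ (d - 1)) := by
    simpa using hasSum_ascPochhammer_div_factorial_mul_pow (1 - d) (u := z)
      (by rwa [abs_of_nonneg hz0])
  have hM_succ : HasSum (fun m => M (m + 1) * z ^ (m + 1)) ((1 - z) ^ (d - 1) - 1) := by
    simpa [M] using (hasSum_nat_add_iff' 1).2 hM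
  have hEuler := hasSum_setIntegral_rpow_mul_one_sub_mul_rpow (a := 1 - d) (b := 1 - d)
    (by linarith) (by linarith) hz0 hz1
  rw [show 1 - d - 1 = -d by ring, neg_sub] at hEuler
  refine (hasSum_nat_add_iff' 1).1 ?_
  convert (hM_succ.sub (hM.mul_left z)).add (hEuler.mul_left (d * z)) using 1
  · funext m
    have hpos := ascPochhammer_pos m (1 - d) (by linarith)
    have hm : (m : ℝ) + (1 - d) ≠ 0 := by linarith [(Nat.cast_nonneg m : (0 : ℝ) ≤ m)]
    simp only [M]
    rw [ascPochhammer_succ_eval_left, neg_add_eq_sub, ascPochhammer_succ_eval,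
      Nat.factorial_succ, add_comm (1 - d)]
    push_cast
    field_simp
    ring
  · have h1z : 0 < 1 - z := by linarith
    rw [Finset.sum_range_one]
    simp only [ascPochhammer_zero, Polynomial.eval_one, Nat.factorial_zero, Nat.cast_one,
      div_one, pow_zero, mul_one, rpow_sub_one h1z.ne']
    field_simp
    ring

theorem setIntegral_Ioi_one_div_add_rpow {p x : ℝ} (hp : 0 < p) (hx : 0 ≤ x) :
    ∫ w in Ioi (1 : ℝ), x / (x + w ^ p) = p⁻¹ * (x / (1 + x)) * (1 + x) ^ p⁻¹ *
      ∫ s in Ioo (0 : ℝ) 1, s ^ (-p⁻¹) * (1 - s * (x / (1 + x))) ^ (p⁻¹ - 1) := by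
  -- the substitution `w = y s ^ (1/p)` makes `x / (x + w ^ p) = x s / (1 + x)`
  set y : ℝ → ℝ := fun s => (1 + x) * s⁻¹ - x
  have hy (s : ℝ) (hs : s ∈ Ioo (0 : ℝ) 1) : 1 < y s := by
    have : 1 + x < (1 + x) * s⁻¹ :=
      lt_mul_of_one_lt_right (by positivity) ((one_lt_inv₀ hs.1).2 hs.2)
    simp only [y]
    linarith
  have hderiv (s : ℝ) (hs : s ∈ Ioo (0 : ℝ) 1) : HasDerivWithinAt (fun s => y s ^ p⁻¹)
      ((1 + x) * -(s ^ 2)⁻¹ * p⁻¹ * y s ^ (p⁻¹ - 1)) (Ioo 0 1) s :=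
    ((((hasDerivAt_inv hs.1.ne').const_mul (1 + x)).sub_const x).rpow_const
      (Or.inl (by linarith [hy s hs]))).hasDerivWithinAt
  have hinj : InjOn (fun s => y s ^ p⁻¹) (Ioo 0 1) := by
    intro s hs s' hs' h
    have h' := congrArg (· ^ p) h
    simp only [rpow_inv_rpow (by linarith [hy s hs] : 0 ≤ y s) hp.ne',
      rpow_inv_rpow (by linarith [hy s' hs'] : 0 ≤ y s') hp.ne', y] at h'
    have : (1 + x) * s⁻¹ = (1 + x) * s'⁻¹ := by linarith
    rwa [mul_right_inj' (by positivity), inv_inj] at this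
  have himage : (fun s => y s ^ p⁻¹) '' Ioo 0 1 = Ioi 1 := by
    refine Subset.antisymm ?_ fun w (hw : 1 < w) => ?_
    · rintro _ ⟨s, hs, rfl⟩
      exact one_lt_rpow (hy s hs) (inv_pos.2 hp)
    · have hwp : 1 < w ^ p := one_lt_rpow hw hp
      refine ⟨(1 + x) / (x + w ^ p),
        ⟨by positivity, by rw [div_lt_one (by positivity)]; linarith⟩, ?_⟩
      simp only [y]
      rw [inv_div, mul_div_cancel₀ _ (by positivity), add_sub_cancel_left,
        rpow_rpow_inv (by linarith) hp.ne']
  rw [← himage, integral_image_eq_integral_abs_deriv_smul measurableSet_Ioo hderiv hinj,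
    ← integral_const_mul]
  refine setIntegral_congr_fun measurableSet_Ioo fun s ⟨hs0, hs1⟩ => ?_
  set q := 1 - s * (x / (1 + x))
  have hq : 0 < q := by
    have hz : x / (1 + x) < 1 := by rw [div_lt_one (by positivity)]; linarith
    have hz0 : 0 ≤ x / (1 + x) := by positivity
    simp only [q]
    nlinarith
  have hyq : y s = (1 + x) * q * s⁻¹ := by
    simp only [y, q]
    field_simp
  rw [rpow_inv_rpow (by linarith [hy s ⟨hs0, hs1⟩]) hp.ne', hyq,
    mul_rpow (by positivity) (by positivity), mul_rpow (by positivity) hq.le, inv_rpow hs0.le,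
    rpow_sub_one (by positivity), rpow_sub_one hq.ne', rpow_sub_one hs0.ne', rpow_neg hs0.le,
    smul_eq_mul, abs_of_nonpos]
  · field_simp
    simp only [q]
    field_simp
    ring
  · rw [mul_neg, neg_mul, neg_mul, neg_nonpos]
    positivity

/-- Pfaff transformation identity for the coverage function: for `α > 2`, `x ≥ 0`
and `δ = 2/α`, the series `Σ_{n=0}^∞ ((-δ)_n)²/((1-δ)_n n!) (x/(1+x))^n` (which is
`₂F₁(-δ, -δ; 1-δ; x/(1+x))`) converges, and
`h_α(x) = (1+x)^(2/α) · Σ_{n=0}^∞ ((-δ)_n)²/((1-δ)_n n!) (x/(1+x))^n`;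
equivalently `P_α(x) = c₀(x)·(1+x)^(-2/α)` with `c₀(x)` the reciprocal of that sum. -/
theorem sir_coverage_pfaff (α : ℝ) (hα : 2 < α) (x : ℝ) (hx : 0 ≤ x) :
    Summable (fun n : ℕ => ((ascPochhammer ℝ n).eval (-(2 / α))) ^ 2 /
        ((ascPochhammer ℝ n).eval (1 - 2 / α) * (n.factorial : ℝ)) * (x / (1 + x)) ^ n) ∧
    hcov α x = (1 + x) ^ (2 / α) *
      ∑' n : ℕ, ((ascPochhammer ℝ n).eval (-(2 / α))) ^ 2 /
        ((ascPochhammer ℝ n).eval (1 - 2 / α) * (n.factorial : ℝ)) * (x / (1 + x)) ^ n ∧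
    Pcov α x =
      (∑' n : ℕ, ((ascPochhammer ℝ n).eval (-(2 / α))) ^ 2 /
        ((ascPochhammer ℝ n).eval (1 - 2 / α) * (n.factorial : ℝ)) * (x / (1 + x)) ^ n)⁻¹ *
      (1 + x) ^ (-(2 / α)) := by
  have h1x : 0 < 1 + x := by linarith
  have hz1 : x / (1 + x) < 1 := (div_lt_one h1x).2 (by linarith)
  have hseries := hasSum_hypergeometric_pfaff ((div_lt_one (by linarith)).2 hα) (by positivity) hz1
  have hcov_eq : hcov α x = (1 + x) ^ (2 / α) * ((1 - x / (1 + x)) ^ (2 / α) +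
      2 / α * (x / (1 + x)) * ∫ s in Ioo (0 : ℝ) 1,
        s ^ (-(2 / α)) * (1 - s * (x / (1 + x))) ^ (2 / α - 1)) := by
    have hpow : (1 + x) ^ (2 / α) * (1 - x / (1 + x)) ^ (2 / α) = 1 := by
      rw [← mul_rpow h1x.le (by linarith), mul_one_sub, mul_div_cancel₀ _ h1x.ne',
        add_sub_cancel_right, one_rpow]
    rw [hcov, setIntegral_Ioi_one_div_add_rpow (by linarith) hx, inv_div, mul_add, hpow]
    ring
  refine ⟨hseries.summable, by rw [hseries.tsum_eq, hcov_eq], ?_⟩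
  rw [Pcov, hseries.tsum_eq, hcov_eq, mul_inv, rpow_neg h1x.le, mul_comm]
end

section
/- For every real α > 2, the SIR coverage function P_α is convex on [0, ∞). -/
open MeasureTheory Filter Real Set

lemma hcov_denom_pos {α x w : ℝ} (hx : 0 ≤ x) (hw : 1 < w) :
    0 < x + w ^ (α / 2) := by
  have : (0:ℝ) < w ^ (α / 2) := Real.rpow_pos_of_pos (by linarith) _
  linarith

lemma hcov_integrable {α : ℝ} (hα : 2 < α) {x : ℝ} (hx : 0 ≤ x) :
    IntegrableOn (fun w : ℝ => x / (x + w ^ (α / 2))) (Set.Ioi 1) := by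
  have hbig : IntegrableOn (fun w : ℝ => x * w ^ (-(α / 2))) (Set.Ioi 1) :=
    (integrableOn_Ioi_rpow_of_lt (by linarith) one_pos).const_mul x
  refine hbig.mono' ?_ ?_
  · apply ContinuousOn.aestronglyMeasurable ?_ measurableSet_Ioi
    intro w hw
    have hw1 : (1:ℝ) < w := hw
    apply ContinuousAt.continuousWithinAt
    exact ContinuousAt.div continuousAt_const
      (continuousAt_const.add (Real.continuousAt_rpow_const w _ (Or.inl (by linarith))))
      (hcov_denom_pos hx hw1).ne'
  · rw [ae_restrict_iff' measurableSet_Ioi]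
    filter_upwards with w hw
    have hw1 : (1:ℝ) < w := hw
    have hpos := hcov_denom_pos (α := α) hx hw1
    have hwp : (0:ℝ) < w ^ (α / 2) := Real.rpow_pos_of_pos (by linarith) _
    rw [Real.norm_eq_abs, abs_of_nonneg (div_nonneg hx hpos.le),
      Real.rpow_neg (by linarith : (0:ℝ) ≤ w), div_le_iff₀ hpos]
    nlinarith [mul_inv_cancel₀ hwp.ne', mul_nonneg (mul_nonneg hx hx) (inv_nonneg.mpr hwp.le)]

lemma hcov_ge_one {α : ℝ} {x : ℝ} (hx : 0 ≤ x) : 1 ≤ hcov α x := by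
  unfold hcov
  have : 0 ≤ ∫ w in Set.Ioi (1:ℝ), x / (x + w ^ (α / 2)) := by
    apply setIntegral_nonneg measurableSet_Ioi
    intro w hw
    exact div_nonneg hx (hcov_denom_pos hx hw).le
  linarith

lemma hcov_concave_ineq {α : ℝ} (hα : 2 < α) {x y a b : ℝ}
    (hx : 0 ≤ x) (hy : 0 ≤ y) (ha : 0 ≤ a) (hb : 0 ≤ b) (hab : a + b = 1) :
    a * hcov α x + b * hcov α y ≤ hcov α (a * x + b * y) := by
  have hz : 0 ≤ a * x + b * y := by positivity
  have hix := hcov_integrable hα hx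
  have hiy := hcov_integrable hα hy
  have hiz := hcov_integrable hα hz
  unfold hcov
  have key : ∫ w in Set.Ioi (1:ℝ), (a * (x / (x + w ^ (α/2))) + b * (y / (y + w ^ (α/2))))
      ≤ ∫ w in Set.Ioi (1:ℝ), (a * x + b * y) / ((a * x + b * y) + w ^ (α/2)) := by
    apply setIntegral_mono_on ((hix.const_mul a).add (hiy.const_mul b)) hiz measurableSet_Ioi
    intro w hw
    simp only [Pi.add_apply]
    have hw1 : (1:ℝ) < w := hw
    have hc : (0:ℝ) < w ^ (α/2) := Real.rpow_pos_of_pos (by linarith) _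
    set c := w ^ (α/2) with hcdef
    have hX : (0:ℝ) < x + c := by linarith
    have hY : (0:ℝ) < y + c := by linarith
    have hZ : (0:ℝ) < a * x + b * y + c := by linarith
    rw [mul_div_assoc' a, mul_div_assoc' b, div_add_div _ _ hX.ne' hY.ne',
      div_le_div_iff₀ (by positivity) hZ]
    have hb' : b = 1 - a := by linarith
    rw [hb']
    nlinarith [mul_nonneg (mul_nonneg (mul_nonneg ha (by linarith : (0:ℝ) ≤ 1 - a)) hc.le) (sq_nonneg (x - y))]
  have hsplit : a * (1 + ∫ w in Set.Ioi (1:ℝ), x / (x + w ^ (α/2)))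
      + b * (1 + ∫ w in Set.Ioi (1:ℝ), y / (y + w ^ (α/2)))
      = 1 + ∫ w in Set.Ioi (1:ℝ), (a * (x / (x + w ^ (α/2))) + b * (y / (y + w ^ (α/2)))) := by
    rw [integral_add (hix.const_mul a) (hiy.const_mul b),
      integral_const_mul, integral_const_mul]
    linear_combination hab
  rw [hsplit]
  linarith [key]

/-- For every `α > 2`, the SIR coverage function `P_α` is convex on `[0, ∞)`. -/
theorem sir_coverage_convex (α : ℝ) (hα : 2 < α) :
    ConvexOn ℝ (Set.Ici 0) (Pcov α) := by
  refine ⟨convex_Ici 0, fun x hx y hy a b ha hb hab => ?_⟩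
  have hx0 : (0:ℝ) ≤ x := hx
  have hy0 : (0:ℝ) ≤ y := hy
  simp only [smul_eq_mul, Pcov]
  have hu := hcov_ge_one (α := α) hx0
  have hv := hcov_ge_one (α := α) hy0
  have hcon := hcov_concave_ineq hα hx0 hy0 ha hb hab
  have hmean : (0:ℝ) < a * hcov α x + b * hcov α y := by nlinarith
  have step1 : (hcov α (a * x + b * y))⁻¹ ≤ (a * hcov α x + b * hcov α y)⁻¹ :=
    inv_anti₀ hmean hcon
  have step2 : (a * hcov α x + b * hcov α y)⁻¹ ≤ a * (hcov α x)⁻¹ + b * (hcov α y)⁻¹ := by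
    have hup : (0:ℝ) < hcov α x := by linarith
    have hvp : (0:ℝ) < hcov α y := by linarith
    rw [inv_eq_one_div, inv_eq_one_div, inv_eq_one_div,
      mul_div_assoc' a, mul_div_assoc' b, div_add_div _ _ hup.ne' hvp.ne',
      div_le_div_iff₀ hmean (by positivity)]
    have hb' : b = 1 - a := by linarith
    rw [hb']
    nlinarith [mul_nonneg (mul_nonneg ha (by linarith : (0:ℝ) ≤ 1 - a)) (sq_nonneg (hcov α x - hcov α y))]
  calc (hcov α (a * x + b * y))⁻¹ ≤ (a * hcov α x + b * hcov α y)⁻¹ := step1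
    _ ≤ a * (hcov α x)⁻¹ + b * (hcov α y)⁻¹ := step2
end

section
/- Optimal BS-specific frequency reuse (continuous relaxation of Proposition 3, FR_b): let β > 1 and k > 0. The function r(M) = M^(−1)·ln(1 + k·M^β), defined for M > 0, attains a global maximum at a unique point M* > 0, and M* is characterized by the first-order condition (1 + 1/(k·(M*)^β))·ln(1 + k·(M*)^β) = β. -/
open Filter Real Set

private lemma log1p_lt {u : ℝ} (hu : 0 < u) : Real.log (1 + u) < u := by
  have h := Real.add_one_lt_exp (x := u) hu.ne'
  calc Real.log (1 + u) < Real.log (Real.exp u) :=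
        Real.log_lt_log (by linarith) (by linarith)
    _ = u := Real.log_exp u

private noncomputable def gA : ℝ → ℝ := fun u => (1 + u⁻¹) * Real.log (1 + u)

private lemma gA_hasDeriv {u : ℝ} (hu : 0 < u) :
    HasDerivAt gA (-(u ^ 2)⁻¹ * Real.log (1 + u) + (1 + u⁻¹) * (1 / (1 + u))) u := by
  have h2 : HasDerivAt (fun u : ℝ => 1 + u) 1 u := (hasDerivAt_id u).const_add 1
  have h3 : HasDerivAt (fun u : ℝ => Real.log (1 + u)) (1 / (1 + u)) u := by
    simpa using h2.log (by linarith : (1:ℝ) + u ≠ 0)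
  exact ((hasDerivAt_inv hu.ne').const_add 1).mul h3

private lemma gA_strictMono : StrictMonoOn gA (Ioi 0) := by
  have key : ∀ x ∈ interior (Ioi (0:ℝ)), 0 < deriv gA x := by
    rw [interior_Ioi]
    intro u hu
    have hu : (0:ℝ) < u := hu
    have h1u : (0:ℝ) < 1 + u := by linarith
    rw [(gA_hasDeriv hu).deriv]
    have e1 : (1 + u⁻¹) * (1 / (1 + u)) = u⁻¹ := by field_simp; ring
    have hL := log1p_lt hu
    have e2 : -(u ^ 2)⁻¹ * Real.log (1 + u) + u⁻¹ = (u - Real.log (1 + u)) / u ^ 2 := by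
      field_simp; ring
    rw [e1, e2]
    exact div_pos (by linarith) (by positivity)
  exact strictMonoOn_of_deriv_pos (convex_Ioi 0)
    (fun x hx => (gA_hasDeriv hx).continuousAt.continuousWithinAt) key

private lemma key_lt {β U : ℝ} (hU : 0 < U) (hg : gA U < β) :
    (1 + U) * Real.log (1 + U) < β * U := by
  have e0 : U * (1 + U⁻¹) = 1 + U := by field_simp; ring
  have h := mul_lt_mul_of_pos_left hg hU
  rw [show gA U = (1 + U⁻¹) * Real.log (1 + U) from rfl, ← mul_assoc, e0] at h
  linarith

private lemma key_gt {β U : ℝ} (hU : 0 < U) (hg : β < gA U) :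
    β * U < (1 + U) * Real.log (1 + U) := by
  have e0 : U * (1 + U⁻¹) = 1 + U := by field_simp; ring
  have h := mul_lt_mul_of_pos_left hg hU
  rw [show gA U = (1 + U⁻¹) * Real.log (1 + U) from rfl, ← mul_assoc, e0] at h
  linarith

private lemma exists_ustar {β : ℝ} (hβ : 1 < β) : ∃ u, 0 < u ∧ gA u = β := by
  set a : ℝ := (β - 1) / 2 with ha
  have ha0 : 0 < a := by simp only [ha]; linarith
  set b : ℝ := Real.exp β with hb
  have hβexp : β + 1 < Real.exp β := Real.add_one_lt_exp (by linarith : β ≠ 0)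
  have hab : a ≤ b := by simp only [ha, hb]; nlinarith
  have hb0 : 0 < b := Real.exp_pos β
  have hga : gA a < β := by
    have hL : Real.log (1 + a) ≤ a := (log1p_lt ha0).le
    have h1 : (1 + a⁻¹) * Real.log (1 + a) ≤ (1 + a⁻¹) * a := by
      apply mul_le_mul_of_nonneg_left hL
      positivity
    have e : (1 + a⁻¹) * a = a + 1 := by field_simp
    have : gA a ≤ a + 1 := by rw [gA, ← e]; exact h1
    simp only [ha] at this ⊢
    linarith
  have hgb : β < gA b := by
    have hL : β < Real.log (1 + b) := by
      calc β = Real.log (Real.exp β) := (Real.log_exp β).symm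
        _ < Real.log (1 + b) := Real.log_lt_log hb0 (by simp only [hb]; linarith)
    have hL0 : 0 < Real.log (1 + b) := lt_trans (by linarith) hL
    have h1 : (1:ℝ) ≤ 1 + b⁻¹ := by
      have : (0:ℝ) < b⁻¹ := by positivity
      linarith
    calc β < Real.log (1 + b) := hL
      _ = 1 * Real.log (1 + b) := (one_mul _).symm
      _ ≤ (1 + b⁻¹) * Real.log (1 + b) := by
          exact mul_le_mul_of_nonneg_right h1 hL0.le
  have hc : ContinuousOn gA (Icc a b) := fun x hx =>
    (gA_hasDeriv (lt_of_lt_of_le ha0 hx.1)).continuousAt.continuousWithinAt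
  have hmem : β ∈ Icc (gA a) (gA b) := ⟨hga.le, hgb.le⟩
  obtain ⟨u, hu, hgu⟩ := intermediate_value_Icc hab hc hmem
  exact ⟨u, lt_of_lt_of_le ha0 hu.1, hgu⟩

/-- Optimal BS-specific frequency reuse (continuous relaxation of Proposition 3, FR_b):
for `β > 1` and `k > 0`, the function `r(M) = M⁻¹·ln(1 + k·M^β)` on `(0,∞)` attains a
global maximum at a unique point `M* > 0`, characterized by the first-order condition
`(1 + 1/(k·M*^β))·ln(1 + k·M*^β) = β`. -/
theorem optimal_bs_frequency_reuse (β k : ℝ) (hβ : 1 < β) (hk : 0 < k) :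
    ∃ M : ℝ, 0 < M ∧
      (∀ M' : ℝ, 0 < M' →
        M'⁻¹ * Real.log (1 + k * M' ^ β) ≤ M⁻¹ * Real.log (1 + k * M ^ β)) ∧
      (∀ M' : ℝ, 0 < M' →
        (∀ M'' : ℝ, 0 < M'' →
          M''⁻¹ * Real.log (1 + k * M'' ^ β) ≤ M'⁻¹ * Real.log (1 + k * M' ^ β)) →
        M' = M) ∧
      (1 + 1 / (k * M ^ β)) * Real.log (1 + k * M ^ β) = β := by
  obtain ⟨u, hu0, hgu⟩ := exists_ustar hβ
  have hβ0 : (0:ℝ) < β := by linarith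
  have huk : 0 < u / k := div_pos hu0 hk
  set M₀ : ℝ := (u / k) ^ (1 / β) with hM₀def
  have hM0 : 0 < M₀ := Real.rpow_pos_of_pos huk _
  have hMu : k * M₀ ^ β = u := by
    have h1 : M₀ ^ β = u / k := by
      rw [hM₀def, ← Real.rpow_mul huk.le, one_div, inv_mul_cancel₀ hβ0.ne', Real.rpow_one]
    rw [h1]
    field_simp
  set r : ℝ → ℝ := fun M => M⁻¹ * Real.log (1 + k * M ^ β) with hrdef
  set D : ℝ → ℝ := fun M =>
    (β * (k * M ^ β) - (1 + k * M ^ β) * Real.log (1 + k * M ^ β)) /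
      (M ^ 2 * (1 + k * M ^ β)) with hDdef
  -- positivity of 1 + k M^β
  have hUpos : ∀ M : ℝ, 0 < M → 0 < k * M ^ β := fun M hM =>
    mul_pos hk (Real.rpow_pos_of_pos hM β)
  have h1U : ∀ M : ℝ, 0 < M → 0 < 1 + k * M ^ β := fun M hM => by
    have := hUpos M hM; linarith
  -- derivative of r
  have hder : ∀ M : ℝ, 0 < M → HasDerivAt r (D M) M := by
    intro M hM
    have h1 : HasDerivAt (fun M : ℝ => M ^ β) (β * M ^ (β - 1)) M :=
      Real.hasDerivAt_rpow_const (Or.inl hM.ne')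
    have h2 : HasDerivAt (fun M : ℝ => 1 + k * M ^ β) (k * (β * M ^ (β - 1))) M :=
      (h1.const_mul k).const_add 1
    have h3 : HasDerivAt (fun M : ℝ => Real.log (1 + k * M ^ β))
        (k * (β * M ^ (β - 1)) / (1 + k * M ^ β)) M := h2.log (h1U M hM).ne'
    have h4 : HasDerivAt (fun M : ℝ => M⁻¹) (-(M ^ 2)⁻¹) M := hasDerivAt_inv hM.ne'
    have h5 := h4.mul h3
    have e : -(M ^ 2)⁻¹ * Real.log (1 + k * M ^ β) +
        M⁻¹ * (k * (β * M ^ (β - 1)) / (1 + k * M ^ β)) = D M := by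
      have hsub : M ^ (β - 1) = M ^ β / M := by
        rw [Real.rpow_sub hM, Real.rpow_one]
      rw [hDdef, hsub]
      have hne := (h1U M hM).ne'
      field_simp
      ring
    rw [← e]
    exact h5
  -- sign of derivative
  have hsignpos : ∀ M : ℝ, 0 < M → M < M₀ → 0 < D M := by
    intro M hM hlt
    have hU : 0 < k * M ^ β := hUpos M hM
    have hUu : k * M ^ β < u := by
      rw [← hMu]
      exact mul_lt_mul_of_pos_left (Real.rpow_lt_rpow hM.le hlt hβ0) hk
    have hg : gA (k * M ^ β) < β := by
      calc gA (k * M ^ β) < gA u := gA_strictMono hU hu0 hUu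
        _ = β := hgu
    have hkey := key_lt hU hg
    show 0 < (β * (k * M ^ β) - (1 + k * M ^ β) * Real.log (1 + k * M ^ β)) /
      (M ^ 2 * (1 + k * M ^ β))
    exact div_pos (by linarith) (by positivity)
  have hsignneg : ∀ M : ℝ, M₀ < M → D M < 0 := by
    intro M hlt
    have hM : 0 < M := hM0.trans hlt
    have hU : 0 < k * M ^ β := hUpos M hM
    have hUu : u < k * M ^ β := by
      rw [← hMu]
      exact mul_lt_mul_of_pos_left (Real.rpow_lt_rpow hM0.le hlt hβ0) hk
    have hg : β < gA (k * M ^ β) := by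
      calc β = gA u := hgu.symm
        _ < gA (k * M ^ β) := gA_strictMono hu0 hU hUu
    have hkey := key_gt hU hg
    show (β * (k * M ^ β) - (1 + k * M ^ β) * Real.log (1 + k * M ^ β)) /
      (M ^ 2 * (1 + k * M ^ β)) < 0
    exact div_neg_of_neg_of_pos (by linarith) (by positivity)
  -- monotonicity
  have hmono : StrictMonoOn r (Ioc 0 M₀) := by
    apply strictMonoOn_of_deriv_pos (convex_Ioc 0 M₀)
    · exact fun x hx => (hder x hx.1).continuousAt.continuousWithinAt
    · intro x hx
      rw [interior_Ioc] at hx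
      rw [(hder x hx.1).deriv]
      exact hsignpos x hx.1 hx.2
  have hanti : StrictAntiOn r (Ici M₀) := by
    apply strictAntiOn_of_deriv_neg (convex_Ici M₀)
    · exact fun x hx => (hder x (lt_of_lt_of_le hM0 hx)).continuousAt.continuousWithinAt
    · intro x hx
      rw [interior_Ici] at hx
      rw [(hder x (hM0.trans hx)).deriv]
      exact hsignneg x hx
  have hstrict : ∀ M' : ℝ, 0 < M' → M' ≠ M₀ → r M' < r M₀ := by
    intro M' hM' hne
    rcases lt_or_gt_of_ne hne with h | h
    · exact hmono ⟨hM', h.le⟩ ⟨hM0, le_refl M₀⟩ h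
    · exact hanti (self_mem_Ici) h.le h
  have hmax : ∀ M' : ℝ, 0 < M' → r M' ≤ r M₀ := by
    intro M' hM'
    by_cases hne : M' = M₀
    · rw [hne]
    · exact (hstrict M' hM' hne).le
  refine ⟨M₀, hM0, hmax, ?_, ?_⟩
  · intro M' hM' hM'max
    by_contra hne
    have h1 : r M₀ ≤ r M' := hM'max M₀ hM0
    have h2 : r M' < r M₀ := hstrict M' hM' hne
    linarith
  · rw [hMu]
    have : (1 + u⁻¹) * Real.log (1 + u) = β := hgu
    rw [one_div]
    exact this
end

section
/- Optimal user-specific frequency reuse (continuous relaxation of Proposition 3, FR_u): let β > 1 and c > 0. The function φ(p) = p·ln(1 + c·p^(−β)), defined for p > 0, attains a global maximum at a unique point p* > 0, and p* is characterized by the first-order condition (c + (p*)^β)·ln(1 + c·(p*)^(−β)) = β·c. -/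
/-!
Write `g(p) = 1 + c·p^(-β)`, a strictly decreasing bijection from `(0, ∞)` onto `(1, ∞)`.
Since `g' = -β (g - 1) / p`, one finds `φ'(p) = log g - β (g - 1) / g`, whose sign is that of
`S(g) - β` with `S(x) = x log x / (x - 1)`. Now `S` is the slope of the strictly convex function
`x log x` from the point `1`, hence strictly increasing on `(1, ∞)`; it takes values below `β` near
`1` and above `β` at `e^β`. So `S(x₀) = β` for a unique `x₀ > 1`, and `φ` strictly increases up to
the point `p*` with `g(p*) = x₀` and strictly decreases afterwards. The first-order condition is
`x₀ log x₀ = β (x₀ - 1)` multiplied by `p*^β`.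
-/

open Filter Real Set

theorem strictMonoOn_mul_log_div_sub_one :
    StrictMonoOn (fun x : ℝ => x * log x / (x - 1)) (Ioi 1) := by
  intro x hx y hy hxy
  have hsecant := strictConvexOn_mul_log.secant_strict_mono (a := 1) (by simp)
    (mem_Ici.2 (zero_le_one.trans hx.le)) (mem_Ici.2 (zero_le_one.trans hy.le))
    hx.ne' hy.ne' hxy
  simpa using hsecant

theorem exists_mul_log_div_sub_one_eq {β : ℝ} (hβ : 1 < β) :
    ∃ x₀, 1 < x₀ ∧ x₀ * log x₀ / (x₀ - 1) = β := by
  set a := (1 + β) / 2 with ha_def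
  have ha : 1 < a := by linarith
  have hab : a < exp β := by linarith [add_one_le_exp β]
  have hb : 1 < exp β := ha.trans hab
  have hfa : a * log a / (a - 1) ≤ β := by
    rw [div_le_iff₀ (by linarith)]
    have hlog : a * log a ≤ a * (a - 1) :=
      mul_le_mul_of_nonneg_left (log_le_sub_one_of_pos (by linarith)) (by linarith)
    nlinarith
  have hfb : β ≤ exp β * log (exp β) / (exp β - 1) := by
    rw [log_exp, le_div_iff₀ (by linarith)]
    nlinarith
  have hcont : ContinuousOn (fun x : ℝ => x * log x / (x - 1)) (Icc a (exp β)) :=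
    continuous_mul_log.continuousOn.div (by fun_prop) fun x hx => by linarith [hx.1]
  obtain ⟨x₀, hx₀, hS⟩ := intermediate_value_Icc hab.le hcont ⟨hfa, hfb⟩
  exact ⟨x₀, ha.trans_le hx₀.1, hS⟩

theorem log_sub_mul_sub_one_div_eq {β x : ℝ} (hx : 1 < x) :
    log x - β * (x - 1) / x = (x - 1) / x * (x * log x / (x - 1) - β) := by
  have : x - 1 ≠ 0 := by linarith
  field_simp

theorem lt_of_strictMonoOn_Ioc_of_strictAntiOn_Ici {α β : Type*} [LinearOrder α] [Preorder β]
    {f : α → β} {a p q : α} (hmono : StrictMonoOn f (Ioc a p)) (hanti : StrictAntiOn f (Ici p))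
    (hp : a < p) (hq : a < q) (hqp : q ≠ p) : f q < f p := by
  rcases hqp.lt_or_gt with hlt | hgt
  · exact hmono ⟨hq, hlt.le⟩ ⟨hp, le_rfl⟩ hlt
  · exact hanti self_mem_Ici hgt.le hgt

noncomputable def gainFactor (β c p : ℝ) : ℝ := 1 + c * p ^ (-β)

/-- The ubiquitous rate `R_η(M_u)` as a function of `p = p_c(λ/M_u)`, up to a positive factor. -/
noncomputable def ubiquitousRate (β c p : ℝ) : ℝ := p * log (gainFactor β c p)

section

variable {β c p : ℝ}

theorem one_lt_gainFactor (hc : 0 < c) (hp : 0 < p) : 1 < gainFactor β c p := by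
  unfold gainFactor
  linarith [mul_pos hc (rpow_pos_of_pos hp (-β))]

theorem rpow_mul_gainFactor_sub_one (hp : 0 < p) : p ^ β * (gainFactor β c p - 1) = c := by
  rw [gainFactor, add_sub_cancel_left, rpow_neg hp.le]
  field_simp [(rpow_pos_of_pos hp β).ne']

theorem strictAntiOn_gainFactor (hβ : 0 < β) (hc : 0 < c) :
    StrictAntiOn (gainFactor β c) (Ioi 0) := by
  intro p hp q hq hpq
  have hrpow := rpow_lt_rpow_of_neg hp hpq (neg_lt_zero.2 hβ)
  unfold gainFactor
  linarith [mul_lt_mul_of_pos_left hrpow hc]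

theorem exists_gainFactor_eq (hβ : β ≠ 0) (hc : 0 < c) {x : ℝ} (hx : 1 < x) :
    ∃ p, 0 < p ∧ gainFactor β c p = x := by
  have hpos : 0 < c / (x - 1) := div_pos hc (by linarith)
  refine ⟨(c / (x - 1)) ^ β⁻¹, rpow_pos_of_pos hpos _, ?_⟩
  rw [gainFactor, ← rpow_mul hpos.le, inv_mul_eq_div, neg_div, div_self hβ, rpow_neg_one, inv_div]
  field_simp [(by linarith : x - 1 ≠ 0)]
  ring

theorem hasDerivAt_gainFactor (hp : 0 < p) :
    HasDerivAt (gainFactor β c) (-β * (gainFactor β c p - 1) / p) p := by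
  refine (((hasDerivAt_rpow_const (p := -β) (Or.inl hp.ne')).const_mul c).const_add 1).congr_deriv ?_
  rw [gainFactor, add_sub_cancel_left, rpow_sub_one hp.ne']
  field_simp

theorem hasDerivAt_ubiquitousRate (hc : 0 < c) (hp : 0 < p) :
    HasDerivAt (ubiquitousRate β c)
      (log (gainFactor β c p) - β * (gainFactor β c p - 1) / gainFactor β c p) p := by
  have hg := one_lt_gainFactor (β := β) hc hp
  refine ((hasDerivAt_id' p).fun_mul ((hasDerivAt_gainFactor hp).log (by linarith))).congr_deriv ?_
  field_simp
  ring

theorem continuousOn_ubiquitousRate (hc : 0 < c) : ContinuousOn (ubiquitousRate β c) (Ioi 0) :=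
  fun _ hq => (hasDerivAt_ubiquitousRate hc hq).continuousAt.continuousWithinAt

variable (hβ : 0 < β) (hc : 0 < c) (hp : 0 < p)
  (hS : gainFactor β c p * log (gainFactor β c p) / (gainFactor β c p - 1) = β)
include hβ hc hp hS

theorem strictMonoOn_ubiquitousRate : StrictMonoOn (ubiquitousRate β c) (Ioc 0 p) := by
  refine strictMonoOn_of_deriv_pos (convex_Ioc 0 p)
    ((continuousOn_ubiquitousRate hc).mono Ioc_subset_Ioi_self) fun q hq => ?_
  rw [interior_Ioc] at hq
  have hgp := one_lt_gainFactor (β := β) hc hp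
  have hgpq : gainFactor β c p < gainFactor β c q := strictAntiOn_gainFactor hβ hc hq.1 hp hq.2
  rw [(hasDerivAt_ubiquitousRate hc hq.1).deriv, log_sub_mul_sub_one_div_eq (hgp.trans hgpq)]
  refine mul_pos (div_pos (by linarith) (by linarith)) (sub_pos.2 ?_)
  exact hS.symm.trans_lt (strictMonoOn_mul_log_div_sub_one hgp (hgp.trans hgpq) hgpq)

theorem strictAntiOn_ubiquitousRate : StrictAntiOn (ubiquitousRate β c) (Ici p) := by
  refine strictAntiOn_of_deriv_neg (convex_Ici p)
    ((continuousOn_ubiquitousRate hc).mono fun q hq => hp.trans_le hq) fun q hq => ?_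
  rw [interior_Ici] at hq
  have hq0 : 0 < q := hp.trans hq
  have hgq := one_lt_gainFactor (β := β) hc hq0
  have hgqp : gainFactor β c q < gainFactor β c p := strictAntiOn_gainFactor hβ hc hp hq0 hq
  rw [(hasDerivAt_ubiquitousRate hc hq0).deriv, log_sub_mul_sub_one_div_eq hgq]
  refine mul_neg_of_pos_of_neg (div_pos (by linarith) (by linarith)) (sub_neg.2 ?_)
  exact (strictMonoOn_mul_log_div_sub_one hgq (hgq.trans hgqp) hgqp).trans_eq hS

theorem ubiquitousRate_lt_of_ne {q : ℝ} (hq : 0 < q) (hqp : q ≠ p) :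
    ubiquitousRate β c q < ubiquitousRate β c p :=
  lt_of_strictMonoOn_Ioc_of_strictAntiOn_Ici (strictMonoOn_ubiquitousRate hβ hc hp hS)
    (strictAntiOn_ubiquitousRate hβ hc hp hS) hp hq hqp

end

/-- Optimal user-specific frequency reuse (continuous relaxation of Proposition 3, FR_u):
for `β > 1` and `c > 0`, the function `φ(p) = p·ln(1 + c·p^(-β))` on `(0,∞)` attains a
global maximum at a unique point `p* > 0`, characterized by the first-order condition
`(c + p*^β)·ln(1 + c·p*^(-β)) = β·c`. -/
theorem optimal_user_frequency_reuse (β c : ℝ) (hβ : 1 < β) (hc : 0 < c) :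
    ∃ p : ℝ, 0 < p ∧
      (∀ p' : ℝ, 0 < p' →
        p' * Real.log (1 + c * p' ^ (-β)) ≤ p * Real.log (1 + c * p ^ (-β))) ∧
      (∀ p' : ℝ, 0 < p' →
        (∀ p'' : ℝ, 0 < p'' →
          p'' * Real.log (1 + c * p'' ^ (-β)) ≤ p' * Real.log (1 + c * p' ^ (-β))) →
        p' = p) ∧
      (c + p ^ β) * Real.log (1 + c * p ^ (-β)) = β * c := by
  obtain ⟨x₀, hx₀, hS⟩ := exists_mul_log_div_sub_one_eq hβ
  obtain ⟨p, hp, rfl⟩ := exists_gainFactor_eq (zero_lt_one.trans hβ).ne' hc hx₀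
  have hlt := fun q : ℝ => ubiquitousRate_lt_of_ne (q := q) (zero_lt_one.trans hβ) hc hp hS
  refine ⟨p, hp, fun q hq => ?_, fun q hq hmax => ?_, ?_⟩
  · rcases eq_or_ne q p with rfl | hqp
    · exact le_rfl
    · exact (hlt q hq hqp).le
  · by_contra hqp
    exact (hlt q hq hqp).not_ge (hmax p hp)
  · have hfoc : gainFactor β c p * log (gainFactor β c p) = β * (gainFactor β c p - 1) :=
      (div_eq_iff (sub_pos.2 hx₀).ne').1 hS
    have hc_eq := rpow_mul_gainFactor_sub_one (β := β) (c := c) hp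
    show (c + p ^ β) * log (gainFactor β c p) = β * c
    linear_combination p ^ β * hfoc + (β - log (gainFactor β c p)) * hc_eq
end

section
/- Asymptotically optimal number of channels (continuous relaxation of Corollary 1): let β > 1 and for k > 0 let M*(k) be the unique maximizer on (0, ∞) of M ↦ M^(−1)·ln(1 + k·M^β). Then M*(k) = (s*/k)^(1/β) for the unique s* > 0 with (1 + 1/s*)·ln(1 + s*) = β, hence M*(k) → ∞ as k → 0⁺ and M*(k) → 0 as k → ∞. -/
/-!
Substituting `u = k M^β` turns the objective into `M⁻¹ ln(1 + k M^β) = k^(1/β) · ln(1 + u) u^(-1/β)`,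
so the maximiser is governed by a single function of `u` that does not depend on `k`.
Its derivative has the sign of `β - (1 + 1/u) ln(1 + u)`, and `s ↦ (1 + 1/s) ln(1 + s)` increases
strictly from `1` to `∞`; hence `u ↦ ln(1 + u) u^(-1/β)` increases up to the unique root `s*` of
`(1 + 1/s) ln(1 + s) = β` and decreases after it, and the maximiser is `M = (s*/k)^(1/β)`.
-/

open Filter Real Set Topology

noncomputable def stationarity (s : ℝ) : ℝ := (1 + 1 / s) * log (1 + s)

lemma hasDerivAt_stationarity {s : ℝ} (hs : 0 < s) :
    HasDerivAt stationarity ((s - log (1 + s)) / s ^ 2) s := by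
  have hinv : HasDerivAt (fun x : ℝ => 1 + 1 / x) (-(s ^ 2)⁻¹) s := by
    simpa [one_div] using (hasDerivAt_inv hs.ne').const_add 1
  have hlog : HasDerivAt (fun x : ℝ => log (1 + x)) (1 / (1 + s)) s := by
    simpa using ((hasDerivAt_id s).const_add 1).log (by positivity)
  refine (hinv.mul hlog).congr_deriv ?_
  field_simp
  ring

lemma continuousOn_stationarity : ContinuousOn stationarity (Ioi 0) :=
  fun _ hs => (hasDerivAt_stationarity hs).continuousAt.continuousWithinAt

lemma stationarity_strictMonoOn : StrictMonoOn stationarity (Ioi 0) := by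
  refine strictMonoOn_of_deriv_pos (convex_Ioi 0) continuousOn_stationarity fun s hs => ?_
  rw [interior_Ioi] at hs
  have hs : (0 : ℝ) < s := hs
  have hlog : log (1 + s) < s := by
    linarith [log_lt_sub_one_of_pos (x := 1 + s) (by linarith) (by linarith)]
  rw [(hasDerivAt_stationarity hs).deriv]
  exact div_pos (by linarith) (by positivity)

lemma stationarity_le_one_add {s : ℝ} (hs : 0 < s) : stationarity s ≤ 1 + s := by
  have hlog : log (1 + s) ≤ s := by linarith [log_le_sub_one_of_pos (x := 1 + s) (by linarith)]
  calc stationarity s ≤ (1 + 1 / s) * s := by unfold stationarity; gcongr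
    _ = 1 + s := by field_simp; ring

lemma log_le_stationarity {s : ℝ} (hs : 0 < s) : log s ≤ stationarity s := by
  have hlog : log s ≤ log (1 + s) := log_le_log hs (by linarith)
  have hlog_nonneg : 0 ≤ log (1 + s) := log_nonneg (by linarith)
  unfold stationarity
  nlinarith [show 0 < 1 / s by positivity]

lemma exists_stationarity_eq {β : ℝ} (hβ : 1 < β) : ∃ s, 0 < s ∧ stationarity s = β := by
  have hlo : 0 < (β - 1) / 2 := by linarith
  have hle : (β - 1) / 2 ≤ exp β := by linarith [add_one_le_exp β]
  have hcont : ContinuousOn stationarity (Icc ((β - 1) / 2) (exp β)) :=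
    continuousOn_stationarity.mono fun x hx => lt_of_lt_of_le hlo hx.1
  have hbelow : stationarity ((β - 1) / 2) ≤ β := by linarith [stationarity_le_one_add hlo]
  have habove : β ≤ stationarity (exp β) := by simpa using log_le_stationarity (exp_pos β)
  obtain ⟨s, hs, hsβ⟩ := intermediate_value_Icc hle hcont ⟨hbelow, habove⟩
  exact ⟨s, lt_of_lt_of_le hlo hs.1, hsβ⟩

noncomputable def reducedRate (β u : ℝ) : ℝ := log (1 + u) * u ^ (-1 / β)

lemma hasDerivAt_reducedRate {β u : ℝ} (hβ : β ≠ 0) (hu : 0 < u) :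
    HasDerivAt (reducedRate β) (u ^ (-1 / β) / (β * (1 + u)) * (β - stationarity u)) u := by
  have hlog : HasDerivAt (fun x : ℝ => log (1 + x)) (1 / (1 + u)) u := by
    simpa using ((hasDerivAt_id u).const_add 1).log (by positivity)
  have hpow : HasDerivAt (fun x : ℝ => x ^ (-1 / β)) (-1 / β * u ^ (-1 / β - 1)) u :=
    hasDerivAt_rpow_const (Or.inl hu.ne')
  refine (hlog.mul hpow).congr_deriv ?_
  rw [rpow_sub_one hu.ne', stationarity]
  field_simp
  ring

lemma continuousOn_reducedRate {β : ℝ} (hβ : β ≠ 0) : ContinuousOn (reducedRate β) (Ioi 0) :=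
  fun _ hu => (hasDerivAt_reducedRate hβ hu).continuousAt.continuousWithinAt

section Unimodal

variable {β s : ℝ} (hβ : 0 < β) (hs : 0 < s) (hsβ : stationarity s = β)
include hβ hs hsβ

lemma reducedRate_strictMonoOn : StrictMonoOn (reducedRate β) (Ioc 0 s) := by
  refine strictMonoOn_of_deriv_pos (convex_Ioc 0 s)
    ((continuousOn_reducedRate hβ.ne').mono fun u hu => hu.1) fun u hu => ?_
  rw [interior_Ioc] at hu
  have hu0 : 0 < u := hu.1
  have hgap : stationarity u < β := hsβ ▸ stationarity_strictMonoOn hu0 hs hu.2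
  rw [(hasDerivAt_reducedRate hβ.ne' hu0).deriv]
  exact mul_pos (by positivity) (by linarith)

lemma reducedRate_strictAntiOn : StrictAntiOn (reducedRate β) (Ici s) := by
  refine strictAntiOn_of_deriv_neg (convex_Ici s)
    ((continuousOn_reducedRate hβ.ne').mono fun u hu => lt_of_lt_of_le hs hu) fun u hu => ?_
  rw [interior_Ici] at hu
  have hu0 : 0 < u := hs.trans hu
  have hgap : β < stationarity u := hsβ ▸ stationarity_strictMonoOn hs hu0 hu
  rw [(hasDerivAt_reducedRate hβ.ne' hu0).deriv]
  exact mul_neg_of_pos_of_neg (by positivity) (by linarith)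

lemma reducedRate_lt_of_ne {u : ℝ} (hu : 0 < u) (hus : u ≠ s) :
    reducedRate β u < reducedRate β s := by
  rcases hus.lt_or_gt with hlt | hgt
  · exact reducedRate_strictMonoOn hβ hs hsβ ⟨hu, hlt.le⟩ ⟨hs, le_rfl⟩ hlt
  · exact reducedRate_strictAntiOn hβ hs hsβ (mem_Ici.2 le_rfl) hgt.le hgt

end Unimodal

lemma inv_mul_log_eq_reducedRate {β k M : ℝ} (hβ : β ≠ 0) (hk : 0 < k) (hM : 0 < M) :
    M⁻¹ * log (1 + k * M ^ β) = k ^ (1 / β) * reducedRate β (k * M ^ β) := by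
  have hpow : (k * M ^ β) ^ (-1 / β) = k ^ (-1 / β) * M⁻¹ := by
    rw [mul_rpow hk.le (rpow_nonneg hM.le β), ← rpow_mul hM.le,
      show β * (-1 / β) = -1 by field_simp, rpow_neg_one]
  have hcancel : k ^ (1 / β) * k ^ (-1 / β) = 1 := by
    rw [← rpow_add hk, show 1 / β + -1 / β = 0 by ring, rpow_zero]
  rw [reducedRate, hpow]
  linear_combination (M⁻¹ * log (1 + k * M ^ β)) * hcancel.symm

lemma mul_rpow_eq_iff_eq_rpow {β k M s : ℝ} (hβ : β ≠ 0) (hk : 0 < k) (hM : 0 < M)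
    (hs : 0 ≤ s) : k * M ^ β = s ↔ M = (s / k) ^ (1 / β) := by
  rw [one_div, eq_comm (a := M), rpow_inv_eq (div_nonneg hs hk.le) hM.le hβ, div_eq_iff hk.ne',
    mul_comm, eq_comm]

lemma inv_mul_log_lt_of_ne {β k s M : ℝ} (hβ : 0 < β) (hk : 0 < k) (hs : 0 < s)
    (hsβ : stationarity s = β) (hM : 0 < M) (hne : M ≠ (s / k) ^ (1 / β)) :
    M⁻¹ * log (1 + k * M ^ β) <
      ((s / k) ^ (1 / β))⁻¹ * log (1 + k * ((s / k) ^ (1 / β)) ^ β) := by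
  have hMstar : 0 < (s / k) ^ (1 / β) := rpow_pos_of_pos (div_pos hs hk) _
  have hu : k * ((s / k) ^ (1 / β)) ^ β = s :=
    (mul_rpow_eq_iff_eq_rpow hβ.ne' hk hMstar hs.le).2 rfl
  rw [inv_mul_log_eq_reducedRate hβ.ne' hk hM, inv_mul_log_eq_reducedRate hβ.ne' hk hMstar, hu]
  refine mul_lt_mul_of_pos_left (reducedRate_lt_of_ne hβ hs hsβ (by positivity) ?_) (by positivity)
  exact fun h => hne ((mul_rpow_eq_iff_eq_rpow hβ.ne' hk hM hs.le).1 h)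

lemma tendsto_div_rpow_nhdsGT_zero {s p : ℝ} (hs : 0 < s) (hp : 0 < p) :
    Tendsto (fun k : ℝ => (s / k) ^ p) (𝓝[>] 0) atTop := by
  have hdiv : Tendsto (fun k : ℝ => s / k) (𝓝[>] 0) atTop := by
    simpa only [div_eq_mul_inv] using tendsto_inv_nhdsGT_zero.const_mul_atTop hs
  exact (tendsto_rpow_atTop hp).comp hdiv

lemma tendsto_div_rpow_atTop {s p : ℝ} (hp : 0 < p) :
    Tendsto (fun k : ℝ => (s / k) ^ p) atTop (𝓝 0) := by
  have hdiv : Tendsto (fun k : ℝ => s / k) atTop (𝓝 0) := tendsto_const_nhds.div_atTop tendsto_id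
  have hpow := (continuousAt_rpow_const 0 p (Or.inr hp.le)).tendsto
  rw [zero_rpow hp.ne'] at hpow
  exact hpow.comp hdiv

/-- Asymptotically optimal number of channels (continuous relaxation of Corollary 1):
for `β > 1`, letting `M*(k)` be the unique maximizer on `(0,∞)` of
`M ↦ M⁻¹·ln(1 + k·M^β)` for each `k > 0`, one has `M*(k) = (s*/k)^(1/β)` for the unique
`s* > 0` with `(1 + 1/s*)·ln(1 + s*) = β`; hence `M*(k) → ∞` as `k → 0⁺` and
`M*(k) → 0` as `k → ∞`. -/
theorem asymptotically_optimal_channels (β : ℝ) (hβ : 1 < β) :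
    ∃ s : ℝ, 0 < s ∧ (1 + 1 / s) * Real.log (1 + s) = β ∧
      (∀ s' : ℝ, 0 < s' → (1 + 1 / s') * Real.log (1 + s') = β → s' = s) ∧
      ∃ Mstar : ℝ → ℝ,
        (∀ k : ℝ, 0 < k → Mstar k = (s / k) ^ (1 / β)) ∧
        (∀ k : ℝ, 0 < k → 0 < Mstar k ∧
          (∀ M : ℝ, 0 < M →
            M⁻¹ * Real.log (1 + k * M ^ β) ≤
              (Mstar k)⁻¹ * Real.log (1 + k * (Mstar k) ^ β)) ∧
          (∀ M : ℝ, 0 < M →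
            (∀ M' : ℝ, 0 < M' →
              M'⁻¹ * Real.log (1 + k * M' ^ β) ≤ M⁻¹ * Real.log (1 + k * M ^ β)) →
            M = Mstar k)) ∧
        Filter.Tendsto Mstar (nhdsWithin 0 (Set.Ioi 0)) Filter.atTop ∧
        Filter.Tendsto Mstar Filter.atTop (nhds 0) := by
  obtain ⟨s, hs, hsβ⟩ := exists_stationarity_eq hβ
  have hβ0 : 0 < β := by linarith
  have hp : 0 < 1 / β := by positivity
  refine ⟨s, hs, hsβ, fun s' hs' hs'β => stationarity_strictMonoOn.injOn hs' hs
    (hs'β.trans hsβ.symm), fun k => (s / k) ^ (1 / β), fun _ _ => rfl, fun k hk => ?_,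
    tendsto_div_rpow_nhdsGT_zero hs hp, tendsto_div_rpow_atTop hp⟩
  have hlt := fun M hM => inv_mul_log_lt_of_ne hβ0 hk hs hsβ (M := M) hM
  refine ⟨rpow_pos_of_pos (div_pos hs hk) _, fun M hM => ?_, fun M hM hmax => ?_⟩
  · rcases eq_or_ne M ((s / k) ^ (1 / β)) with rfl | hne
    · exact le_rfl
    · exact (hlt M hM hne).le
  · by_contra hne
    exact (hlt M hM hne).not_ge (hmax _ (rpow_pos_of_pos (div_pos hs hk) _))
end
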